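/- Let N be a finite set of buses and E a set of edges (unordered pairs of distinct buses of N). Suppose real numbers v_i, W_{ij}, W_{ji}, δ_{i,ij}, δ_{j,ij} and binary parameters α_{ij} ∈ {0,1} satisfy: v_i > 0 for all buses i; W_{ij} ≥ 0 and W_{ij} = W_{ji} for every edge {i,j}; δ_{i,ij} = 0 if α_{ij} = 0 and δ_{i,ij} = v_i if α_{ij} = 1; and δ_{i,ij}·δ_{j,ij} − W_{ij}·W_{ji} = 0 for every edge {i,j} (the matrix R_{ij} = [[δ_{i,ij}, W_{ij}], [W_{ji}, δ_{j,ij}]] is rank-deficient). Define V_i := √(v_i) for every bus i and γ_{i,ij} := √(δ_{i,ij}) for every incident bus–edge pair. Then (V, γ) satisfies: V_i > 0 for all i; γ_{i,ij} = 0 if α_{ij} = 0 and γ_{i,ij} = V_i if α_{ij} = 1; δ_{i,ij} = γ_{i,ij}²; W_{ij} = γ_{i,ij}·γ_{j,ij}; and v_i = V_i². In particular, W_{ij} = √(δ_{i,ij}·δ_{j,ij}) for every edge {i,j}. -/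

import Mathlib

/-! A rank-deficient symmetric `2 × 2` matrix `[[δ₁, w], [w, δ₂]]` with `w ≥ 0` has
`w² = δ₁ δ₂`, hence `w = √(δ₁ δ₂) = √δ₁ √δ₂` once the diagonal is nonnegative; the diagonal
entries are `0` or `v i > 0`, so all square roots are honest. -/

lemma nonneg_of_switched {a d x : ℝ} (ha : a = 0 ∨ a = 1)
    (hd : (a = 0 → d = 0) ∧ (a = 1 → d = x)) (hx : 0 ≤ x) : 0 ≤ d := by
  rcases ha with h | h
  · exact (hd.1 h).symm ▸ le_rfl
  · exact (hd.2 h).symm ▸ hx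

lemma eq_sqrt_mul_of_det_eq_zero {d₁ d₂ w : ℝ} (hw : 0 ≤ w) (hdet : d₁ * d₂ - w * w = 0) :
    w = √(d₁ * d₂) := by
  rw [sub_eq_zero.mp hdet, Real.sqrt_mul_self hw]

theorem stmt_1_general {ι : Type*}
    (E : ι → ι → Prop)
    (v : ι → ℝ) (W δ α : ι → ι → ℝ)
    (hα01 : ∀ i j, E i j → α i j = 0 ∨ α i j = 1)
    (hv : ∀ i, 0 < v i)
    (hW0 : ∀ i j, E i j → 0 ≤ W i j)
    (hWsymm : ∀ i j, E i j → W i j = W j i)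
    (hδ : ∀ i j, E i j → (α i j = 0 → δ i j = 0) ∧ (α i j = 1 → δ i j = v i))
    (hrank : ∀ i j, E i j → δ i j * δ j i - W i j * W j i = 0) :
    -- V i > 0 for all buses
    (∀ i, 0 < Real.sqrt (v i)) ∧
    -- γ i j = 0 if the line is off, γ i j = V i if the line is on
    (∀ i j, E i j →
      (α i j = 0 → Real.sqrt (δ i j) = 0) ∧
      (α i j = 1 → Real.sqrt (δ i j) = Real.sqrt (v i))) ∧
    -- the lifting equations hold
    (∀ i j, E i j → δ i j = (Real.sqrt (δ i j)) ^ 2) ∧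
    (∀ i j, E i j → W i j = Real.sqrt (δ i j) * Real.sqrt (δ j i)) ∧
    (∀ i, v i = (Real.sqrt (v i)) ^ 2) ∧
    -- in particular W i j = √(δ i j · δ j i)
    (∀ i j, E i j → W i j = Real.sqrt (δ i j * δ j i)) := by
  have hδ0 : ∀ i j, E i j → 0 ≤ δ i j := fun i j hij =>
    nonneg_of_switched (hα01 i j hij) (hδ i j hij) (hv i).le
  have hWeq : ∀ i j, E i j → W i j = √(δ i j * δ j i) := fun i j hij =>
    eq_sqrt_mul_of_det_eq_zero (hW0 i j hij) (hWsymm i j hij ▸ hrank i j hij)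
  refine ⟨fun i => Real.sqrt_pos.2 (hv i), fun i j hij => ⟨?_, ?_⟩,
    fun i j hij => (Real.sq_sqrt (hδ0 i j hij)).symm, fun i j hij => ?_,
    fun i => (Real.sq_sqrt (hv i).le).symm, hWeq⟩
  · intro h
    rw [(hδ i j hij).1 h, Real.sqrt_zero]
  · intro h
    rw [(hδ i j hij).2 h]
  · rw [hWeq i j hij, Real.sqrt_mul (hδ0 i j hij)]

/-- Existence part of Lemma 1 of the paper: setting `V i := √(v i)` and
`γ i j := √(δ i j)` yields a pair satisfying the original (un-lifted) constraints and
the lifting equations; in particular `W i j = √(δ i j · δ j i)` for every edge. -/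
theorem stmt_1 {ι : Type*} [Fintype ι]
    (E : ι → ι → Prop) (hEsymm : ∀ i j, E i j → E j i)
    (hEirr : ∀ i j, E i j → i ≠ j)
    (v : ι → ℝ) (W δ α : ι → ι → ℝ)
    (hα01 : ∀ i j, E i j → α i j = 0 ∨ α i j = 1)
    (hαsymm : ∀ i j, E i j → α i j = α j i)
    (hv : ∀ i, 0 < v i)
    (hW0 : ∀ i j, E i j → 0 ≤ W i j)
    (hWsymm : ∀ i j, E i j → W i j = W j i)
    (hδ : ∀ i j, E i j → (α i j = 0 → δ i j = 0) ∧ (α i j = 1 → δ i j = v i))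
    (hrank : ∀ i j, E i j → δ i j * δ j i - W i j * W j i = 0) :
    -- V i > 0 for all buses
    (∀ i, 0 < Real.sqrt (v i)) ∧
    -- γ i j = 0 if the line is off, γ i j = V i if the line is on
    (∀ i j, E i j →
      (α i j = 0 → Real.sqrt (δ i j) = 0) ∧
      (α i j = 1 → Real.sqrt (δ i j) = Real.sqrt (v i))) ∧
    -- the lifting equations hold
    (∀ i j, E i j → δ i j = (Real.sqrt (δ i j)) ^ 2) ∧
    (∀ i j, E i j → W i j = Real.sqrt (δ i j) * Real.sqrt (δ j i)) ∧
    (∀ i, v i = (Real.sqrt (v i)) ^ 2) ∧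
    -- in particular W i j = √(δ i j · δ j i)
    (∀ i j, E i j → W i j = Real.sqrt (δ i j * δ j i)) :=
  stmt_1_general E v W δ α hα01 hv hW0 hWsymm hδ hrank
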